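/- arXiv:1206.3622 — 2 statements merged into one kernel-verified Lean document; each statement's English description precedes it below -/
import Mathlib

section
/- The partial parity reversion operations Pi_1 and Pi_2 on double vector bundles commute: there is a canonical isomorphism of functors I_12 : Pi_2 Pi_1 -> Pi_1 Pi_2. In detail, for each double vector bundle D with sides A, B over M there is an isomorphism of double vector bundles I_12 : Pi_B Pi_A D -> Pi_A Pi_B D (both having sides Pi A and Pi B over M) which is the identity on the side bundles, induces minus the identity on the core, and commutes with the morphisms induced on Pi_B Pi_A and Pi_A Pi_B by every morphism of double vector bundles Phi : D_1 -> D_2. -/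
/-!
A concrete coordinate model of (split) supermanifolds sufficient for the local
theory of double vector bundles, Lie (anti)algebroids and homological vector
fields, following Th. Voronov, "Q-manifolds and Mackenzie theory".

A superfunction on the superdomain with even coordinates indexed by `E` and odd
(Grassmann) coordinates indexed by a linearly ordered finite type `O` is recorded by
the family of its coefficients at the ordered odd monomials `θ^S`, `S ⊆ O`.
-/

noncomputable section
namespace Paper

/-- Functions on the split superdomain with even coordinates indexed by `E`
and odd coordinates indexed by `O`. -/
abbrev SuperFn (E O : Type) : Type := (E → ℝ) → Finset O → ℝ

/-- `Fintype` instance for lexicographic sums (used for blocks of odd coordinates). -/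
instance sumLexFintype {α β : Type} [Fintype α] [Fintype β] : Fintype (α ⊕ₗ β) :=
  Fintype.ofEquiv (α ⊕ β) toLex

section Framework

variable {E O : Type} [Fintype E] [DecidableEq E] [Fintype O] [LinearOrder O]

/-- The Koszul sign arising when multiplying ordered odd monomials `θ^T · θ^U`:
`(-1)` to the number of inversions between `T` and `U`. -/
def koszul (T U : Finset O) : ℝ :=
  (-1 : ℝ) ^ ((T ×ˢ U).filter (fun p => p.2 < p.1)).card

/-- The (supercommutative) product of superfunctions. -/
def sfMul (F G : SuperFn E O) : SuperFn E O :=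
  fun x S => ∑ T ∈ S.powerset, koszul T (S \ T) * F x T * G x (S \ T)

/-- The unit superfunction. -/
def sfOne : SuperFn E O := fun _ S => if S = ∅ then 1 else 0

/-- Product of a list of superfunctions (in the given order). -/
def sfList : List (SuperFn E O) → SuperFn E O
  | [] => sfOne
  | F :: l => sfMul F (sfList l)

/-- Partial derivative along the even coordinate `a`. -/
def pdE (a : E) (F : SuperFn E O) : SuperFn E O :=
  fun x S => fderiv ℝ (fun y => F y S) x (Pi.single a 1)

/-- (Left) partial derivative along the odd coordinate `i`. -/
def pdO (i : O) (F : SuperFn E O) : SuperFn E O :=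
  fun x S => if i ∈ S then 0
    else ((-1 : ℝ) ^ ((S.filter (fun j => j < i)).card)) * F x (insert i S)

/-- The even coordinate `a` as a superfunction. -/
def evCoord (a : E) : SuperFn E O := fun x S => if S = ∅ then x a else 0

/-- The odd coordinate `i` as a superfunction. -/
def odCoord (i : O) : SuperFn E O := fun _ S => if S = ({i} : Finset O) then 1 else 0

/-- Smoothness of a superfunction: all its coefficients are `C^∞`. -/
def SfSmooth (F : SuperFn E O) : Prop := ∀ S : Finset O, ContDiff ℝ (⊤ : ℕ∞) fun x => F x S

/-- The even (Grassmann-degree) part of a superfunction. -/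
def evenPart (F : SuperFn E O) : SuperFn E O := fun x S => if S.card % 2 = 0 then F x S else 0

/-- The odd part of a superfunction. -/
def oddPart (F : SuperFn E O) : SuperFn E O := fun x S => if S.card % 2 = 1 then F x S else 0

/-- A superfunction is even if it has no odd part. -/
def SfIsEven (F : SuperFn E O) : Prop := ∀ x S, S.card % 2 = 1 → F x S = 0

/-- A superfunction is odd if it has no even part. -/
def SfIsOdd (F : SuperFn E O) : Prop := ∀ x S, S.card % 2 = 0 → F x S = 0

/-- Homogeneity of weight `k` with respect to the weights `we`, `wo` assigned to the
even and odd coordinates (scaling formulation). -/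
def SfHasWeight (we : E → ℕ) (wo : O → ℕ) (k : ℕ) (F : SuperFn E O) : Prop :=
  ∀ (c : ℝ) (x : E → ℝ) (S : Finset O),
    c ^ k * F x S = c ^ (∑ i ∈ S, wo i) * F (fun a => c ^ we a * x a) S

/-- A (super) vector field on the superdomain, recorded via its coefficients
at `∂/∂(even coordinate)` and `∂/∂(odd coordinate)`. -/
structure SVF (E O : Type) : Type where
  ce : E → SuperFn E O
  co : O → SuperFn E O

/-- The action of a vector field on a superfunction:
`X(F) = Σ Xᵃ ∂F/∂xᵃ + Σ Xⁱ ∂F/∂θⁱ`. -/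
def SVF.app (X : SVF E O) (F : SuperFn E O) : SuperFn E O :=
  (∑ a : E, sfMul (X.ce a) (pdE a F)) + ∑ i : O, sfMul (X.co i) (pdO i F)

def SVF.Smooth (X : SVF E O) : Prop := (∀ a, SfSmooth (X.ce a)) ∧ ∀ i, SfSmooth (X.co i)

/-- An odd vector field: its `∂/∂(even)` coefficients are odd and its
`∂/∂(odd)` coefficients are even. -/
def SVF.IsOdd (X : SVF E O) : Prop := (∀ a, SfIsOdd (X.ce a)) ∧ ∀ i, SfIsEven (X.co i)

/-- A homological vector field: an (odd) vector field squaring to zero,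
`Q² = ½[Q,Q] = 0`, as an operator on (smooth) superfunctions. -/
def SVF.IsHomological (X : SVF E O) : Prop :=
  ∀ F : SuperFn E O, SfSmooth F → X.app (X.app F) = 0

/-- Vanishing of the graded commutator `[X,Y] = X∘Y + Y∘X` of two **odd** vector
fields, as operators on (smooth) superfunctions. -/
def SVF.OddCommute (X Y : SVF E O) : Prop :=
  ∀ F : SuperFn E O, SfSmooth F → X.app (Y.app F) + Y.app (X.app F) = 0

/-- A vector field has weight `k` if its `∂/∂z` coefficient has weight `(weight of z) + k`
for every coordinate `z`.  (All weights occurring in this file are nonnegative.) -/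
def SVF.HasWeight (we : E → ℕ) (wo : O → ℕ) (k : ℕ) (X : SVF E O) : Prop :=
  (∀ a, SfHasWeight we wo (we a + k) (X.ce a)) ∧ ∀ i, SfHasWeight we wo (wo i + k) (X.co i)

/-- Iterated partial derivative of a function of the even variables. -/
def pdMulti {E' : Type} [Fintype E'] [DecidableEq E'] :
    List E' → ((E' → ℝ) → ℝ) → (E' → ℝ) → ℝ
  | [], g => g
  | a :: l, g => fun y => fderiv ℝ (pdMulti l g) y (Pi.single a 1)

/-- Pullback of superfunctions along a map of superdomains written in coordinates:
the pullback of the even coordinate `b` is `(e ·) b` plus a nilpotent even correction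
`ν b` (a superfunction with even Grassmann degrees ≥ 2), and the pullback of the odd
coordinate `j` is the odd superfunction `φo j`.  Substitution in the even arguments is
performed via the (finite, by nilpotency) Taylor expansion in the corrections `ν`. -/
def pullback {E' O' : Type} [Fintype E'] [DecidableEq E'] [Fintype O'] [LinearOrder O']
    (e : (E → ℝ) → E' → ℝ) (ν : E' → SuperFn E O) (φo : O' → SuperFn E O)
    (F : SuperFn E' O') : SuperFn E O :=
  ∑ T : Finset O',
    sfMul
      (∑ k ∈ Finset.range (Fintype.card O + 1), ∑ l : Fin k → E',
        ((k.factorial : ℝ)⁻¹) •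
          sfMul (sfList ((List.ofFn l).map ν))
            (fun y S => if S = ∅ then pdMulti (List.ofFn l) (fun z => F z T) (e y) else 0))
      (sfList ((T.sort (· ≤ ·)).map φo))

/-- Two vector fields are related by (intertwined by) the map of superdomains with
coordinate description `(e, ν, φo)` if `X ∘ Φ* = Φ* ∘ Y` on smooth superfunctions.
By Vaintrob's criterion this expresses that the underlying vector bundle map is a
morphism of the corresponding Lie algebroids. -/
def Related {E' O' : Type} [Fintype E'] [DecidableEq E'] [Fintype O'] [LinearOrder O']
    (e : (E → ℝ) → E' → ℝ) (ν : E' → SuperFn E O) (φo : O' → SuperFn E O)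
    (X : SVF E O) (Y : SVF E' O') : Prop :=
  ∀ F : SuperFn E' O', SfSmooth F → X.app (pullback e ν φo F) = pullback e ν φo (Y.app F)

/-- Partial derivative along a coordinate (even or odd). -/
def pdC (c : E ⊕ O) : SuperFn E O → SuperFn E O :=
  match c with
  | Sum.inl a => pdE a
  | Sum.inr i => pdO i

/-- The signed derivative `(-1)^{c̃(F̃+1)} ∂F/∂z^c` entering the general formula for a
bracket determined by a coordinate table. -/
def signedDer (c : E ⊕ O) (F : SuperFn E O) : SuperFn E O :=
  match c with
  | Sum.inl a => pdE a F
  | Sum.inr i => pdO i (oddPart F) - pdO i (evenPart F)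

/-- The biderivation bracket on superfunctions determined by the values
`S c d = {z^c, z^d}` on coordinates:
`{F,G} = Σ (-1)^{c̃(F̃+1)} ∂F/∂z^c · S c d · ∂G/∂z^d`. -/
def brTable (S : E ⊕ O → E ⊕ O → SuperFn E O) (F G : SuperFn E O) : SuperFn E O :=
  ∑ c : E ⊕ O, ∑ d : E ⊕ O, sfMul (sfMul (signedDer c F) (S c d)) (pdC d G)

/-- The odd vector field `Q` is a derivation of the **odd** (Schouten-type) bracket
with coordinate table `S`:  `Q{F,G} = {QF,G} + (-1)^{F̃+1}{F,QG}`. -/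
def DerivesOdd (Q : SVF E O) (S : E ⊕ O → E ⊕ O → SuperFn E O) : Prop :=
  ∀ F G : SuperFn E O, SfSmooth F → SfSmooth G →
    Q.app (brTable S F G) =
      brTable S (Q.app F) G + brTable S (oddPart F) (Q.app G)
        - brTable S (evenPart F) (Q.app G)

/-- The odd vector field `Q` is a derivation of the **even** (Poisson) bracket
with coordinate table `S`:  `Q{F,G} = {QF,G} + (-1)^{F̃}{F,QG}`. -/
def DerivesEven (Q : SVF E O) (S : E ⊕ O → E ⊕ O → SuperFn E O) : Prop :=
  ∀ F G : SuperFn E O, SfSmooth F → SfSmooth G →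
    Q.app (brTable S F G) =
      brTable S (Q.app F) G + brTable S (evenPart F) (Q.app G)
        - brTable S (oddPart F) (Q.app G)

end Framework

/-- Functions on the (local model of the) base manifold. -/
abbrev BaseFn (n : ℕ) : Type := (Fin n → ℝ) → ℝ

/-- Partial derivative `∂_a f` of a function on the base. -/
def pdB {n : ℕ} (a : Fin n) (f : BaseFn n) : BaseFn n :=
  fun x => fderiv ℝ f x (Pi.single a 1)

/-! ### Block superdomains

Local models of total spaces of (partially parity reversed) double vector bundles:
even coordinates split into base coordinates (`Fin n`) and an even fiber block
(`Fin s`), odd coordinates split into two odd blocks (`Fin u`, `Fin v`). -/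

section Blocks

variable {n : ℕ}

/-- Even coordinates of a superdomain with two even blocks (base + one even fiber block). -/
abbrev Ev (n s : ℕ) : Type := Fin n ⊕ Fin s
/-- Odd coordinates of a superdomain with two odd blocks (ordered lexicographically). -/
abbrev Od (u v : ℕ) : Type := Fin u ⊕ₗ Fin v

/-- A function of the base variables viewed as a superfunction. -/
def bX {s u v : ℕ} (f : BaseFn n) : SuperFn (Ev n s) (Od u v) :=
  fun x S => if S = ∅ then f (fun a => x (Sum.inl a)) else 0
/-- The `μ`-th even fiber coordinate. -/
def cE2 {s u v : ℕ} (μ : Fin s) : SuperFn (Ev n s) (Od u v) := evCoord (Sum.inr μ)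
/-- The `i`-th odd coordinate of the first odd block. -/
def cO1 {s u v : ℕ} (i : Fin u) : SuperFn (Ev n s) (Od u v) := odCoord (toLex (Sum.inl i))
/-- The `μ`-th odd coordinate of the second odd block. -/
def cO2 {s u v : ℕ} (μ : Fin v) : SuperFn (Ev n s) (Od u v) := odCoord (toLex (Sum.inr μ))
/-- A function of the base variables as a superfunction on a purely odd fiber domain. -/
def bXm {u : ℕ} (f : BaseFn n) : SuperFn (Fin n) (Fin u) := fun x S => if S = ∅ then f x else 0

/-- The first weight on a block superdomain of a double vector bundle: the even fiber
block (core-type coordinates) counts `1`. -/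
def w1e {s : ℕ} : Ev n s → ℕ := fun e => match e with
  | Sum.inl _ => 0
  | Sum.inr _ => 1
/-- The first weight: the first odd block counts `1`. -/
def w1o {u v : ℕ} : Od u v → ℕ := fun o => match ofLex o with
  | Sum.inl _ => 1
  | Sum.inr _ => 0
/-- The second weight: the second odd block counts `1`. -/
def w2o {u v : ℕ} : Od u v → ℕ := fun o => match ofLex o with
  | Sum.inl _ => 0
  | Sum.inr _ => 1

end Blocks

section Operators

variable {E O : Type} [Fintype E] [DecidableEq E] [Fintype O] [LinearOrder O]

/-- The graded commutator `[X,Y] = X∘Y + Y∘X` of two odd vector fields,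
as an operator applied to a superfunction. -/
def acOp (X Y : SVF E O) (F : SuperFn E O) : SuperFn E O :=
  X.app (Y.app F) + Y.app (X.app F)

/-- The derived bracket operator `[[Q,X],Y]` (with `Q, X, Y` odd), applied to a
superfunction. -/
def derBrOp (Q X Y : SVF E O) (F : SuperFn E O) : SuperFn E O :=
  acOp Q X (Y.app F) - Y.app (acOp Q X F)

end Operators


/-! ## Auxiliary lemmas for Statement 1 -/

set_option linter.unusedSectionVars false

section AuxMul

variable {E O : Type} [Fintype E] [DecidableEq E] [Fintype O] [LinearOrder O]

lemma sfMul_apply (F G : SuperFn E O) (x : E → ℝ) (S : Finset O) :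
    sfMul F G x S = ∑ T ∈ S.powerset, koszul T (S \ T) * F x T * G x (S \ T) := rfl

lemma koszul_empty_left (U : Finset O) : koszul (∅ : Finset O) U = 1 := by
  simp [koszul]

lemma sfOne_sfMul (F : SuperFn E O) : sfMul sfOne F = F := by
  funext x S
  rw [sfMul_apply, Finset.sum_eq_single (∅ : Finset O)]
  · simp [sfOne, koszul_empty_left]
  · intro b _ hb; simp [sfOne, hb]
  · intro h; exact absurd (Finset.empty_mem_powerset S) h

lemma zero_sfMul (F : SuperFn E O) : sfMul (0 : SuperFn E O) F = 0 := by
  funext x S; simp [sfMul_apply]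

lemma smul_sfMul (c : ℝ) (F G : SuperFn E O) : sfMul (c • F) G = c • sfMul F G := by
  funext x S
  simp only [sfMul_apply, Pi.smul_apply, smul_eq_mul, Finset.mul_sum]
  exact Finset.sum_congr rfl fun T _ => by ring

lemma sfMul_smul (c : ℝ) (F G : SuperFn E O) : sfMul F (c • G) = c • sfMul F G := by
  funext x S
  simp only [sfMul_apply, Pi.smul_apply, smul_eq_mul, Finset.mul_sum]
  exact Finset.sum_congr rfl fun T _ => by ring

lemma sfList_map_smul {α : Type} (c : α → ℝ) (f : α → SuperFn E O) :
    ∀ l : List α, sfList (l.map fun a => c a • f a) = (l.map c).prod • sfList (l.map f)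
  | [] => by simp [sfList]
  | a :: l => by
    simp only [List.map_cons, sfList, sfList_map_smul c f l, List.prod_cons,
      smul_sfMul, sfMul_smul, smul_smul]
    rw [mul_comm]

lemma sfList_odCoord :
    ∀ l : List O, l.Pairwise (· < ·) →
      sfList (l.map fun o => (odCoord o : SuperFn E O))
        = fun _ S => if S = l.toFinset then 1 else 0
  | [], _ => by funext x S; simp [sfList, sfOne]; by_cases h : S = ∅ <;> simp_all
  | i :: l, h => by
    rcases List.pairwise_cons.mp h with ⟨hi, hl⟩
    have hinotin : i ∉ l.toFinset := fun hmem => absurd (hi i (List.mem_toFinset.mp hmem)) (lt_irrefl i)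
    funext x S
    rw [List.map_cons]
    show sfMul (odCoord i) (sfList (l.map fun o => (odCoord o : SuperFn E O))) x S = _
    rw [sfList_odCoord l hl]
    by_cases hiS : i ∈ S
    · rw [sfMul_apply, Finset.sum_eq_single_of_mem ({i} : Finset O)
        (Finset.mem_powerset.mpr (Finset.singleton_subset_iff.mpr hiS))
        (fun b _ hb => by simp [odCoord, hb])]
      by_cases hST : S \ {i} = l.toFinset
      · have hS : S = insert i l.toFinset := by
          rw [← hST, Finset.sdiff_singleton_eq_erase, Finset.insert_erase hiS]
        have hk : koszul ({i} : Finset O) (S \ {i}) = 1 := by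
          rw [hST]
          have h0 : (((({i} : Finset O) ×ˢ l.toFinset)).filter (fun p => p.2 < p.1)) = ∅ := by
            apply Finset.filter_eq_empty_iff.mpr
            intro p hp
            rcases Finset.mem_product.mp hp with ⟨hp1, hp2⟩
            have : i < p.2 := hi p.2 (List.mem_toFinset.mp hp2)
            rw [Finset.mem_singleton.mp hp1]
            exact not_lt.mpr this.le
          simp only [koszul]
          rw [h0]
          simp
        rw [if_pos hST, hk, List.toFinset_cons, if_pos hS]
        simp [odCoord]
      · have hS : S ≠ insert i l.toFinset := by
          intro hS
          apply hST
          rw [hS, Finset.insert_sdiff_of_mem _ (Finset.mem_singleton_self i),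
            Finset.sdiff_singleton_eq_erase, Finset.erase_eq_of_notMem hinotin]
        simp [odCoord, hST, List.toFinset_cons, hS]
    · have hS : S ≠ insert i l.toFinset := fun hS => hiS (hS ▸ Finset.mem_insert_self i _)
      rw [sfMul_apply, Finset.sum_eq_zero, List.toFinset_cons, if_neg hS]
      intro U hU
      have : U ≠ {i} := by
        intro h'; exact hiS (Finset.mem_powerset.mp hU (h' ▸ Finset.mem_singleton_self i))
      simp [odCoord, this]

end AuxMul

/-! ## Statement 1: the partial parity reversions commute -/

section Stmt1

/-- A morphism of double vector bundles in local coordinates: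
`Φ^*(x₂) = φ(x₁)`, `Φ^*(u₂^{i₂}) = u^{i₁}Φ_{i₁}^{i₂}`, `Φ^*(w₂^{α₂}) = w^{α₁}Φ_{α₁}^{α₂}`,
`Φ^*(z₂^{μ₂}) = z^{μ₁}Φ_{μ₁}^{μ₂} + u^{i₁}w^{α₁}Φ_{α₁i₁}^{μ₂}`. -/
structure DVBMorph (n₁ p₁ q₁ r₁ n₂ p₂ q₂ r₂ : ℕ) : Type where
  base : (Fin n₁ → ℝ) → Fin n₂ → ℝ
  Pi : Fin p₁ → Fin p₂ → BaseFn n₁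
  Pa : Fin q₁ → Fin q₂ → BaseFn n₁
  Pm : Fin r₁ → Fin r₂ → BaseFn n₁
  Pai : Fin q₁ → Fin p₁ → Fin r₂ → BaseFn n₁

def DVBMorph.Smooth {n₁ p₁ q₁ r₁ n₂ p₂ q₂ r₂ : ℕ}
    (Φ : DVBMorph n₁ p₁ q₁ r₁ n₂ p₂ q₂ r₂) : Prop :=
  ContDiff ℝ (⊤ : ℕ∞) Φ.base ∧ (∀ i i₂, ContDiff ℝ (⊤ : ℕ∞) (Φ.Pi i i₂)) ∧
  (∀ α α₂, ContDiff ℝ (⊤ : ℕ∞) (Φ.Pa α α₂)) ∧ (∀ μ μ₂, ContDiff ℝ (⊤ : ℕ∞) (Φ.Pm μ μ₂)) ∧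
  ∀ α i μ₂, ContDiff ℝ (⊤ : ℕ∞) (Φ.Pai α i μ₂)

/-- The pullback along the morphism `Φ^{Π₂Π₁} : Π₂Π₁D₁ → Π₂Π₁D₂` induced on the
doubly parity-reversed bundles (coordinates `x, t; ξ, η`, core coordinate law
`Φ^*(t₂^{μ₂}) = t^{μ}Φ_{μ}^{μ₂} + ξ^{i}η^{α}Φ_{αi}^{μ₂}`, purely even base). -/
def pb21 {n₁ p₁ q₁ r₁ n₂ p₂ q₂ r₂ : ℕ} (Φ : DVBMorph n₁ p₁ q₁ r₁ n₂ p₂ q₂ r₂) :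
    SuperFn (Ev n₂ r₂) (Od p₂ q₂) → SuperFn (Ev n₁ r₁) (Od p₁ q₁) :=
  pullback
    (fun xt e => match e with
      | Sum.inl a₂ => Φ.base (fun a => xt (Sum.inl a)) a₂
      | Sum.inr μ₂ => ∑ μ, xt (Sum.inr μ) * Φ.Pm μ μ₂ (fun a => xt (Sum.inl a)))
    (fun e => match e with
      | Sum.inl _ => 0
      | Sum.inr μ₂ => ∑ i, ∑ α, sfMul (cO1 i) (sfMul (cO2 α) (bX (Φ.Pai α i μ₂))))
    (fun o => match ofLex o with
      | Sum.inl i₂ => ∑ i, sfMul (cO1 i) (bX (Φ.Pi i i₂))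
      | Sum.inr α₂ => ∑ α, sfMul (cO2 α) (bX (Φ.Pa α α₂)))

/-- The pullback along the morphism `Φ^{Π₁Π₂} : Π₁Π₂D₁ → Π₁Π₂D₂` (coordinates
`x, s; ξ, η`, core coordinate law
`Φ^*(s₂^{μ₂}) = s^{μ}Φ_{μ}^{μ₂} - ξ^{i}η^{α}Φ_{αi}^{μ₂}`). -/
def pb12 {n₁ p₁ q₁ r₁ n₂ p₂ q₂ r₂ : ℕ} (Φ : DVBMorph n₁ p₁ q₁ r₁ n₂ p₂ q₂ r₂) :
    SuperFn (Ev n₂ r₂) (Od p₂ q₂) → SuperFn (Ev n₁ r₁) (Od p₁ q₁) :=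
  pullback
    (fun xt e => match e with
      | Sum.inl a₂ => Φ.base (fun a => xt (Sum.inl a)) a₂
      | Sum.inr μ₂ => ∑ μ, xt (Sum.inr μ) * Φ.Pm μ μ₂ (fun a => xt (Sum.inl a)))
    (fun e => match e with
      | Sum.inl _ => 0
      | Sum.inr μ₂ => - ∑ i, ∑ α, sfMul (cO1 i) (sfMul (cO2 α) (bX (Φ.Pai α i μ₂))))
    (fun o => match ofLex o with
      | Sum.inl i₂ => ∑ i, sfMul (cO1 i) (bX (Φ.Pi i i₂))
      | Sum.inr α₂ => ∑ α, sfMul (cO2 α) (bX (Φ.Pa α α₂)))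

/-- The pullback along the canonical map `I₁₂ : Π₂Π₁D → Π₁Π₂D`, which is the identity
on the base and the side coordinates `ξ^i, η^α` and `-identity` on the core
(`I₁₂^*(s^μ) = -t^μ`). -/
def pbI {n p q r : ℕ} : SuperFn (Ev n r) (Od p q) → SuperFn (Ev n r) (Od p q) :=
  pullback
    (fun xt e => match e with
      | Sum.inl a => xt (Sum.inl a)
      | Sum.inr μ => - xt (Sum.inr μ))
    (fun _ => 0)
    (fun o => odCoord o)


/-! ### The flip machinery -/

section FlipAux

/-- The sign flip of the second (core-type) block of even coordinates. -/
def flipE {n r : ℕ} : (Ev n r → ℝ) → Ev n r → ℝ := fun xt e =>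
  match e with
  | Sum.inl a => xt (Sum.inl a)
  | Sum.inr μ => - xt (Sum.inr μ)

/-- The sign of a coordinate under the flip. -/
def sgn {n r : ℕ} : Ev n r → ℝ := fun e =>
  match e with
  | Sum.inl _ => 1
  | Sum.inr _ => -1

variable {n r u v : ℕ}

@[simp] lemma flipE_inl (x : Ev n r → ℝ) (a : Fin n) : flipE x (Sum.inl a) = x (Sum.inl a) := rfl
@[simp] lemma flipE_inr (x : Ev n r → ℝ) (μ : Fin r) : flipE x (Sum.inr μ) = - x (Sum.inr μ) := rfl
@[simp] lemma sgn_inl (a : Fin n) : (sgn (Sum.inl a : Ev n r)) = 1 := rfl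
@[simp] lemma sgn_inr (μ : Fin r) : (sgn (Sum.inr μ : Ev n r)) = -1 := rfl

lemma flipE_flipE (x : Ev n r → ℝ) : flipE (flipE x) = x := by
  funext e; cases e <;> simp

/-- The flip as a continuous linear equivalence. -/
def flipCLE (n r : ℕ) : (Ev n r → ℝ) ≃L[ℝ] (Ev n r → ℝ) :=
  ContinuousLinearEquiv.piCongrRight fun e =>
    match e with
    | Sum.inl _ => ContinuousLinearEquiv.refl ℝ ℝ
    | Sum.inr _ => ContinuousLinearEquiv.neg ℝ

lemma flipCLE_apply (x : Ev n r → ℝ) : flipCLE n r x = flipE x := by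
  funext e
  cases e <;> rfl

lemma flipCLE_single (a : Ev n r) :
    flipCLE n r (Pi.single a 1) = sgn a • (Pi.single a 1 : Ev n r → ℝ) := by
  funext e
  rw [flipCLE_apply]
  rcases a with a | μ <;> rcases e with b | ν <;>
    simp [Pi.single_apply, Pi.smul_apply] <;> aesop

lemma fderiv_flip_single (h : (Ev n r → ℝ) → ℝ) (y : Ev n r → ℝ) (a : Ev n r) :
    fderiv ℝ (fun z => h (flipE z)) y (Pi.single a 1)
      = sgn a * fderiv ℝ h (flipE y) (Pi.single a 1) := by
  have h1 : (fun z => h (flipE z)) = h ∘ ⇑(flipCLE n r) := by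
    funext z; rw [Function.comp_apply, flipCLE_apply]
  rw [h1, ContinuousLinearEquiv.comp_right_fderiv, ContinuousLinearMap.comp_apply]
  rw [show ((flipCLE n r : (Ev n r → ℝ) →L[ℝ] (Ev n r → ℝ)) (Pi.single a 1))
      = sgn a • (Pi.single a 1 : Ev n r → ℝ) from flipCLE_single a]
  rw [map_smul, smul_eq_mul, flipCLE_apply]

lemma sgn_prod_pm : ∀ l : List (Ev n r), (l.map sgn).prod = 1 ∨ (l.map sgn).prod = -1
  | [] => Or.inl (by simp)
  | a :: l => by
    rcases sgn_prod_pm l with h | h <;> rcases a with a | μ <;>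
      simp [List.prod_cons, h]

lemma fderiv_pm_mul (c : ℝ) (hc : c = 1 ∨ c = -1) (u : (Ev n r → ℝ) → ℝ)
    (y : Ev n r → ℝ) (w : Ev n r → ℝ) :
    fderiv ℝ (fun z => c * u z) y w = c * fderiv ℝ u y w := by
  rcases hc with h | h <;> subst h
  · simp
  · have : (fun z => (-1 : ℝ) * u z) = fun z => -(u z) := by funext z; ring
    rw [this, fderiv_fun_neg]
    simp

lemma pdMulti_flip : ∀ (l : List (Ev n r)) (g : (Ev n r → ℝ) → ℝ),
    pdMulti l (fun z => g (flipE z)) = fun y => (l.map sgn).prod * pdMulti l g (flipE y)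
  | [], g => by funext y; simp [pdMulti]
  | a :: l, g => by
    funext y
    show fderiv ℝ (pdMulti l fun z => g (flipE z)) y (Pi.single a 1) = _
    rw [pdMulti_flip l g]
    have hstep : fderiv ℝ (fun y => (l.map sgn).prod * (fun z => pdMulti l g z) (flipE y)) y
        (Pi.single a 1)
        = (l.map sgn).prod * fderiv ℝ (fun y => pdMulti l g (flipE y)) y (Pi.single a 1) := by
      have := fderiv_pm_mul ((l.map sgn).prod) (sgn_prod_pm l)
        (fun y => pdMulti l g (flipE y)) y (Pi.single a 1)
      exact this
    rw [hstep, fderiv_flip_single (pdMulti l g) y a]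
    show _ = ((a :: l).map sgn).prod * fderiv ℝ (pdMulti l g) (flipE y) (Pi.single a 1)
    rw [List.map_cons, List.prod_cons]
    ring

/-- A superfunction depending on the base coordinates only (in the even variables). -/
def BOnly (F : SuperFn (Ev n r) (Od u v)) : Prop := ∀ (x : Ev n r → ℝ) S, F (flipE x) S = F x S

lemma BOnly_bX (f : BaseFn n) : BOnly (bX f : SuperFn (Ev n r) (Od u v)) := fun _ _ => rfl

lemma BOnly_odCoord (o : Od u v) : BOnly (odCoord o : SuperFn (Ev n r) (Od u v)) :=
  fun _ _ => rfl

lemma BOnly_cO1 (i : Fin u) : BOnly (cO1 (s := r) i : SuperFn (Ev n r) (Od u v)) :=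
  fun _ _ => rfl

lemma BOnly_cO2 (μ : Fin v) : BOnly (cO2 (s := r) μ : SuperFn (Ev n r) (Od u v)) :=
  fun _ _ => rfl

lemma BOnly_zero : BOnly (0 : SuperFn (Ev n r) (Od u v)) := fun _ _ => rfl

lemma BOnly.sfMul {F G : SuperFn (Ev n r) (Od u v)} (hF : BOnly F) (hG : BOnly G) :
    BOnly (sfMul F G) := by
  intro x S
  simp only [sfMul_apply]
  exact Finset.sum_congr rfl fun T _ => by rw [hF, hG]

lemma BOnly.sum {ι : Type} (s : Finset ι) (f : ι → SuperFn (Ev n r) (Od u v))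
    (h : ∀ i ∈ s, BOnly (f i)) : BOnly (∑ i ∈ s, f i) := by
  intro x S
  simp only [Finset.sum_apply]
  exact Finset.sum_congr rfl fun i hi => h i hi x S

lemma BOnly_sfOne : BOnly (sfOne : SuperFn (Ev n r) (Od u v)) := fun _ _ => rfl

lemma BOnly.sfList : ∀ l : List (SuperFn (Ev n r) (Od u v)), (∀ F ∈ l, BOnly F) →
    BOnly (Paper.sfList l)
  | [], _ => BOnly_sfOne
  | F :: l, h => BOnly.sfMul (h F (by simp)) (BOnly.sfList l fun G hG => h G (by simp [hG]))

end FlipAux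


section Subst

variable {E E' : Type} [Fintype E] [DecidableEq E] [Fintype E'] [DecidableEq E']
variable {O : Type} [Fintype O] [LinearOrder O]

lemma sfList_zero_of_pos (k : ℕ) (l : Fin k → E') (hk : k ≠ 0) :
    sfList ((List.ofFn l).map (fun _ => (0 : SuperFn E O))) = 0 := by
  obtain ⟨m, rfl⟩ := Nat.exists_eq_succ_of_ne_zero hk
  rw [List.ofFn_succ, List.map_cons]
  show sfMul 0 _ = 0
  exact zero_sfMul _

/-- Substitution lemma: a pullback with zero nilpotent corrections and coordinate
odd pullbacks is just substitution in the arguments. -/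
lemma pullback_subst (e : (E → ℝ) → E' → ℝ) (F : SuperFn E' O) :
    pullback e (fun _ => (0 : SuperFn E O)) (fun o => (odCoord o : SuperFn E O)) F
      = fun x S => F (e x) S := by
  have hA : ∀ T : Finset O,
      (∑ k ∈ Finset.range (Fintype.card O + 1), ∑ l : Fin k → E',
        ((k.factorial : ℝ)⁻¹) •
          sfMul (sfList ((List.ofFn l).map (fun _ => (0 : SuperFn E O))))
            (fun y S => if S = ∅ then pdMulti (List.ofFn l) (fun z => F z T) (e y) else 0))
      = (fun y S => if S = ∅ then F (e y) T else (0 : ℝ)) := by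
    intro T
    rw [Finset.sum_eq_single 0]
    · rw [Fintype.sum_unique]
      simp [sfList, sfOne_sfMul, pdMulti, List.ofFn_zero]
    · intro b _ hb
      apply Finset.sum_eq_zero
      intro l _
      rw [sfList_zero_of_pos b l hb, zero_sfMul, smul_zero]
    · intro h
      exact absurd (Finset.mem_range.mpr (Nat.succ_pos _)) h
  have hB : ∀ T : Finset O,
      sfList ((T.sort (· ≤ ·)).map (fun o => (odCoord o : SuperFn E O)))
        = fun _ S => if S = T then (1 : ℝ) else 0 := by
    intro T
    rw [sfList_odCoord _ (Finset.sortedLT_sort T).pairwise, Finset.sort_toFinset]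
  have hmain : pullback e (fun _ => (0 : SuperFn E O)) (fun o => (odCoord o : SuperFn E O)) F
      = ∑ T : Finset O, sfMul (fun y S => if S = ∅ then F (e y) T else (0 : ℝ))
          (fun _ S => if S = T then (1 : ℝ) else 0) := by
    unfold pullback
    exact Finset.sum_congr rfl fun T _ => by rw [hA T, hB T]
  rw [hmain]
  funext x S
  rw [Finset.sum_apply, Finset.sum_apply]
  rw [Finset.sum_eq_single S]
  · rw [sfMul_apply, Finset.sum_eq_single_of_mem (∅ : Finset O) (Finset.empty_mem_powerset S)]
    · simp [koszul_empty_left]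
    · intro b _ hb; simp [hb]
  · intro T _ hT
    rw [sfMul_apply]
    apply Finset.sum_eq_zero
    intro U hU
    by_cases hUe : U = ∅
    · subst hUe
      simp [Finset.sdiff_empty, Ne.symm hT]
    · simp [hUe]
  · intro h; exact absurd (Finset.mem_univ S) h

end Subst


section FlipPullback

variable {n₁ r₁ p₁ q₁ n₂ r₂ p₂ q₂ : ℕ}

lemma pullback_flip
    (e : (Ev n₁ r₁ → ℝ) → Ev n₂ r₂ → ℝ)
    (he : ∀ x, e (flipE x) = flipE (e x))
    (ν : Ev n₂ r₂ → SuperFn (Ev n₁ r₁) (Od p₁ q₁))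
    (hν : ∀ c, BOnly (ν c))
    (φo : Od p₂ q₂ → SuperFn (Ev n₁ r₁) (Od p₁ q₁))
    (hφ : ∀ o, BOnly (φo o))
    (ν' : Ev n₂ r₂ → SuperFn (Ev n₁ r₁) (Od p₁ q₁))
    (hν' : ∀ c, ν' c = sgn c • ν c)
    (F : SuperFn (Ev n₂ r₂) (Od p₂ q₂)) :
    pullback e ν φo (fun z T => F (flipE z) T)
      = fun x S => pullback e ν' φo F (flipE x) S := by
  rw [show ν' = fun c => sgn c • ν c from funext hν']
  funext x S
  unfold pullback
  simp only [Finset.sum_apply]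
  refine Finset.sum_congr rfl fun T _ => ?_
  have hBT : BOnly (sfList ((T.sort (· ≤ ·)).map φo)) := by
    apply BOnly.sfList
    intro G hG
    rcases List.mem_map.mp hG with ⟨o, _, rfl⟩
    exact hφ o
  rw [sfMul_apply, sfMul_apply]
  refine Finset.sum_congr rfl fun U hU => ?_
  rw [hBT]
  congr 1
  congr 1
  -- A-factors
  simp only [Finset.sum_apply, Pi.smul_apply, smul_eq_mul]
  refine Finset.sum_congr rfl fun k _ => Finset.sum_congr rfl fun l _ => ?_
  congr 1
  have hP : BOnly (sfList ((List.ofFn l).map ν)) := by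
    apply BOnly.sfList
    intro G hG
    rcases List.mem_map.mp hG with ⟨c, _, rfl⟩
    exact hν c
  have hpd : pdMulti (List.ofFn l) (fun z => F (flipE z) T)
      = fun y => (((List.ofFn l).map sgn).prod) * pdMulti (List.ofFn l) (fun z => F z T) (flipE y) :=
    pdMulti_flip (List.ofFn l) (fun z => F z T)
  rw [sfMul_apply, sfMul_apply]
  refine Finset.sum_congr rfl fun V hV => ?_
  rw [sfList_map_smul sgn ν (List.ofFn l)]
  rw [hpd, he x]
  simp only [Pi.smul_apply, smul_eq_mul]
  rw [hP x V]
  split <;> ring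

end FlipPullback

/-- **Proposition 1 of the paper.**  The partial parity reversions of
double vector bundles commute: the canonical map `I₁₂ : Π_BΠ_A D → Π_AΠ_B D` is an
isomorphism of double vector bundles — it is involutive, acts as the identity on the
base and on both side bundles and as `-id` on the core, preserves both weights (so it
is a morphism of double vector bundles) — and it commutes with the morphisms induced
on `Π_BΠ_A` and `Π_AΠ_B` by every morphism `Φ : D₁ → D₂` of double vector bundles;
i.e. `I₁₂ : Π₂Π₁ → Π₁Π₂` is an isomorphism of functors. -/
theorem parity_reversions_commute :
    -- `I₁₂` is invertible (indeed involutive):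
    (∀ (n p q r : ℕ) (F : SuperFn (Ev n r) (Od p q)), pbI (pbI F) = F) ∧
    -- identity on the base and the sides, `-id` on the core:
    (∀ (n p q r : ℕ) (f : BaseFn n), pbI (bX f : SuperFn (Ev n r) (Od p q)) = bX f) ∧
    (∀ (n p q r : ℕ) (i : Fin p), pbI (cO1 i : SuperFn (Ev n r) (Od p q)) = cO1 i) ∧
    (∀ (n p q r : ℕ) (α : Fin q), pbI (cO2 α : SuperFn (Ev n r) (Od p q)) = cO2 α) ∧
    (∀ (n p q r : ℕ) (μ : Fin r), pbI (cE2 μ : SuperFn (Ev n r) (Od p q)) = - cE2 μ) ∧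
    -- it preserves both weights, i.e. it is a morphism of double vector bundles:
    (∀ (n p q r : ℕ) (k₁ k₂ : ℕ) (F : SuperFn (Ev n r) (Od p q)),
        SfHasWeight w1e w1o k₁ F → SfHasWeight w1e w2o k₂ F →
        SfHasWeight w1e w1o k₁ (pbI F) ∧ SfHasWeight w1e w2o k₂ (pbI F)) ∧
    -- naturality: `I₁₂ ∘ Φ^{Π₂Π₁} = Φ^{Π₁Π₂} ∘ I₁₂` for every morphism `Φ : D₁ → D₂`:
    (∀ (n₁ p₁ q₁ r₁ n₂ p₂ q₂ r₂ : ℕ) (Φ : DVBMorph n₁ p₁ q₁ r₁ n₂ p₂ q₂ r₂),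
        Φ.Smooth → ∀ F : SuperFn (Ev n₂ r₂) (Od p₂ q₂), SfSmooth F →
          pb21 Φ (pbI F) = pbI (pb12 Φ F)) := by
  have hpbI : ∀ {n p q r : ℕ} (G : SuperFn (Ev n r) (Od p q)),
      pbI G = fun x S => G (flipE x) S := fun G => pullback_subst flipE G
  refine ⟨?_, ?_, ?_, ?_, ?_, ?_, ?_⟩
  · -- involutivity
    intro n p q r F
    simp only [hpbI]
    funext x S
    rw [flipE_flipE]
  · -- base
    intro n p q r f
    simp only [hpbI]
    funext x S
    rfl
  · -- first side
    intro n p q r i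
    simp only [hpbI]
    funext x S
    rfl
  · -- second side
    intro n p q r α
    simp only [hpbI]
    funext x S
    rfl
  · -- core
    intro n p q r μ
    simp only [hpbI]
    funext x S
    simp only [cE2, evCoord, Pi.neg_apply, flipE_inr]
    split <;> simp
  · -- weights
    intro n p q r k₁ k₂ F h1 h2
    have hflip : ∀ (we : Ev n r → ℕ) (c : ℝ) (x : Ev n r → ℝ),
        flipE (fun a => c ^ we a * x a) = fun a => c ^ we a * flipE x a := by
      intro we c x
      funext a
      rcases a with a | μ
      · rfl
      · show -(c ^ we (Sum.inr μ) * x (Sum.inr μ)) = c ^ we (Sum.inr μ) * -(x (Sum.inr μ))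
        ring
    constructor
    · intro c x S
      simp only [hpbI]
      rw [hflip w1e c x]
      exact h1 c (flipE x) S
    · intro c x S
      simp only [hpbI]
      rw [hflip w1e c x]
      exact h2 c (flipE x) S
  · -- naturality
    intro n₁ p₁ q₁ r₁ n₂ p₂ q₂ r₂ Φ hΦ F hF
    have he : ∀ x : Ev n₁ r₁ → ℝ,
        (fun (xt : Ev n₁ r₁ → ℝ) (e : Ev n₂ r₂) => match e with
          | Sum.inl a₂ => Φ.base (fun a => xt (Sum.inl a)) a₂
          | Sum.inr μ₂ => ∑ μ, xt (Sum.inr μ) * Φ.Pm μ μ₂ (fun a => xt (Sum.inl a)))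
          (flipE x)
        = flipE ((fun (xt : Ev n₁ r₁ → ℝ) (e : Ev n₂ r₂) => match e with
          | Sum.inl a₂ => Φ.base (fun a => xt (Sum.inl a)) a₂
          | Sum.inr μ₂ => ∑ μ, xt (Sum.inr μ) * Φ.Pm μ μ₂ (fun a => xt (Sum.inl a))) x) := by
      intro x
      funext c
      rcases c with a₂ | μ₂
      · rfl
      · show (∑ μ, -x (Sum.inr μ) * Φ.Pm μ μ₂ (fun a => x (Sum.inl a)))
          = -(∑ μ, x (Sum.inr μ) * Φ.Pm μ μ₂ (fun a => x (Sum.inl a)))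
        simp [neg_mul]
    have hν : ∀ c : Ev n₂ r₂, BOnly ((fun e => match e with
        | Sum.inl _ => (0 : SuperFn (Ev n₁ r₁) (Od p₁ q₁))
        | Sum.inr μ₂ => ∑ i, ∑ α, sfMul (cO1 i) (sfMul (cO2 α) (bX (Φ.Pai α i μ₂)))) c) := by
      intro c
      rcases c with a | μ₂
      · exact BOnly_zero
      · exact BOnly.sum _ _ fun i _ => BOnly.sum _ _ fun α _ =>
          (BOnly_cO1 i).sfMul ((BOnly_cO2 α).sfMul (BOnly_bX _))
    have hφ : ∀ o : Od p₂ q₂, BOnly (((fun o => match ofLex o with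
        | Sum.inl i₂ => ∑ i, sfMul (cO1 i) (bX (Φ.Pi i i₂))
        | Sum.inr α₂ => ∑ α, sfMul (cO2 α) (bX (Φ.Pa α α₂))) :
          Od p₂ q₂ → SuperFn (Ev n₁ r₁) (Od p₁ q₁)) o) := by
      intro o
      rcases o with i₂ | α₂
      · exact BOnly.sum _ _ fun i _ => (BOnly_cO1 i).sfMul (BOnly_bX _)
      · exact BOnly.sum _ _ fun α _ => (BOnly_cO2 α).sfMul (BOnly_bX _)
    have hν' : ∀ c : Ev n₂ r₂, ((fun e => match e with
        | Sum.inl _ => (0 : SuperFn (Ev n₁ r₁) (Od p₁ q₁))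
        | Sum.inr μ₂ => - ∑ i, ∑ α, sfMul (cO1 i) (sfMul (cO2 α) (bX (Φ.Pai α i μ₂)))) c)
        = sgn c • ((fun e => match e with
        | Sum.inl _ => (0 : SuperFn (Ev n₁ r₁) (Od p₁ q₁))
        | Sum.inr μ₂ => ∑ i, ∑ α, sfMul (cO1 i) (sfMul (cO2 α) (bX (Φ.Pai α i μ₂)))) c) := by
      intro c
      rcases c with a | μ₂ <;> simp [sgn]
    have h1 : pbI F = fun z T => F (flipE z) T := pullback_subst flipE F
    have h2 : pbI (pb12 Φ F) = fun x S => pb12 Φ F (flipE x) S := pullback_subst flipE _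
    rw [h1, h2]
    exact pullback_flip _ he _ hν _ hφ _ hν' F

end Stmt1

end Paper
end
end

section
/- The bilinear form u^i u_i - w^alpha w_alpha is invariant under the simultaneous changes of fiber coordinates u^i = u^{i'} T_{i'}^i, w_{alpha'} = T_{alpha'}^alpha w_alpha + u^{i'} T_{alpha' i'}^mu z_mu on D^{*A} and u_{i'} = T_{i'}^i u_i + w^{alpha'} T_{alpha' i'}^mu z_mu, w^alpha = w^{alpha'} T_{alpha'}^alpha on D^{*B} over the common change z_{mu'} = T_{mu'}^mu z_mu on the base K^* (the terms involving z_mu arising in the transformation of u^i u_i and of w^alpha w_alpha cancel each other because of the minus sign); hence it defines a canonical (up to overall sign) fiberwise duality between the vector bundles D^{*A} -> K^* and D^{*B} -> K^*. -/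
/-!
**Statement 14** (from Th. Voronov, "Q-manifolds and Mackenzie theory").

For a double vector bundle `D` with sides `A`, `B`, core `K`, the duals `D^{*A}` and
`D^{*B}` are vector bundles over `K^*` with fiber coordinates `(u^i, w_α)` and
`(u_i, w^α)` respectively.  The bilinear form `u^i u_i - w^α w_α` is invariant under
the simultaneous changes of fiber coordinates
`u^i = u^{i'} T_{i'}^i`,
`w_{α'} = T_{α'}^α w_α + u^{i'} T_{α'i'}^μ z_μ`  (on `D^{*A}`),
`u_{i'} = T_{i'}^i u_i + w^{α'} T_{α'i'}^μ z_μ`,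
`w^α = w^{α'} T_{α'}^α`  (on `D^{*B}`),
over the common base `K^*` (`z_μ`): the terms involving `z_μ` cancel because of the
minus sign.  Hence it defines a canonical (up to overall sign) fiberwise duality
between `D^{*A} → K^*` and `D^{*B} → K^*`.
-/

noncomputable section
namespace Paper

/-- Invariance of the pairing `u^i u_i - w^α w_α` between the two
duals `D^{*A} → K^*` and `D^{*B} → K^*` of a double vector bundle under the induced
changes of fiber coordinates over a common point of `K^*`. -/
theorem duality_pairing_invariant {p q r : ℕ}
    (Ti : Fin p → Fin p → ℝ)    -- `T_{i'}^i`
    (Ta : Fin q → Fin q → ℝ)    -- `T_{α'}^α`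
    (Tai : Fin q → Fin p → Fin r → ℝ)  -- `T_{α'i'}^μ`
    (z : Fin r → ℝ)             -- the common base point of `K^*`
    (u uK : Fin p → ℝ) (ulo ulo' : Fin p → ℝ)
    (w w' : Fin q → ℝ) (wlo wlo' : Fin q → ℝ)
    -- `u^i = u^{i'} T_{i'}^i` (side coordinates of `D^{*A}` over `K^*`):
    (hu : ∀ i, u i = ∑ i', uK i' * Ti i' i)
    -- `w_{α'} = T_{α'}^α w_α + u^{i'} T_{α'i'}^μ z_μ` (core coordinates of `D^{*A}`):
    (hwlo : ∀ α', wlo' α' = (∑ α, Ta α' α * wlo α) + ∑ i', ∑ μ, uK i' * Tai α' i' μ * z μ)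
    -- `u_{i'} = T_{i'}^i u_i + w^{α'} T_{α'i'}^μ z_μ` (core coordinates of `D^{*B}`):
    (hulo : ∀ i', ulo' i' = (∑ i, Ti i' i * ulo i) + ∑ α', ∑ μ, w' α' * Tai α' i' μ * z μ)
    -- `w^α = w^{α'} T_{α'}^α` (side coordinates of `D^{*B}` over `K^*`):
    (hw : ∀ α, w α = ∑ α', w' α' * Ta α' α) :
    (∑ i, u i * ulo i) - (∑ α, w α * wlo α) =
      (∑ i', uK i' * ulo' i') - ∑ α', w' α' * wlo' α' := by
  simp only [hu, hwlo, hulo, hw, Finset.sum_mul, Finset.mul_sum, mul_add,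
    Finset.sum_add_distrib]
  rw [Finset.sum_comm (f := fun x i => uK i * Ti i x * ulo x),
      Finset.sum_comm (f := fun x i => w' i * Ta i x * wlo x),
      Finset.sum_comm (f := fun (x : Fin p) (x1 : Fin q) =>
        ∑ i : Fin r, uK x * (w' x1 * Tai x1 x i * z i))]
  ring_nf
  have h : ∀ (a : Fin q) (b : Fin p) (c : Fin r),
      uK b * w' a * Tai a b c * z c = w' a * uK b * Tai a b c * z c := by
    intros; ring
  simp [h]

end Paper
end
end
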